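/- arXiv:1404.5363 — 2 statements merged into one kernel-verified Lean document; each statement's English description precedes it below -/
import Mathlib

section
/- Let α > 1, 0 < m ≤ M, and let n < N be positive integers satisfying m·(N−n)^{−α} ≤ M·(N−n)^{−1}·(N^{1−α} + n^{1−α}). Then ρ := N/n satisfies ρ ≥ 1 + [ (m/M)·(1 + ρ^{1−α})^{−1} ]^{1/(α−1)}. -/
open Real

theorem stmt4 (α m M : ℝ) (hα : 1 < α) (hm : 0 < m) (hmM : m ≤ M)
    (n N : ℕ) (hn : 0 < n) (hnN : n < N)
    (hkey : m * ((N : ℝ) - n) ^ (-α) ≤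
      M * ((N : ℝ) - n)⁻¹ * ((N : ℝ) ^ (1 - α) + (n : ℝ) ^ (1 - α))) :
    1 + ((m / M) * (1 + ((N : ℝ) / n) ^ (1 - α))⁻¹) ^ (1 / (α - 1)) ≤ (N : ℝ) / n := by
  have hM : (0:ℝ) < M := hm.trans_le hmM
  have hnn : (0:ℝ) < (n:ℝ) := by exact_mod_cast hn
  have hNn : (0:ℝ) < (N:ℝ) := by exact_mod_cast hn.trans hnN
  have hx : (0:ℝ) < (N:ℝ) - n := by
    have : (n:ℝ) < N := by exact_mod_cast hnN
    linarith
  set ρ : ℝ := (N:ℝ) / n with hρ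
  have hρ1 : 1 < ρ := by
    rw [hρ, lt_div_iff₀ hnn]
    have : (n:ℝ) < N := by exact_mod_cast hnN
    linarith
  have hρ0 : 0 < ρ := by linarith
  have ht : (0:ℝ) < 1 + ρ ^ (1 - α) := by positivity
  -- step 1: multiply hkey by x
  have h1 : m * ((N:ℝ) - n) ^ (1 - α) ≤ M * ((N:ℝ) ^ (1 - α) + (n:ℝ) ^ (1 - α)) := by
    have hmul := mul_le_mul_of_nonneg_right hkey hx.le
    calc m * ((N:ℝ) - n) ^ (1 - α) = m * ((N:ℝ) - n) ^ (-α) * ((N:ℝ) - n) := by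
          rw [mul_assoc, ← Real.rpow_add_one hx.ne', neg_add_eq_sub]
      _ ≤ M * ((N:ℝ) - n)⁻¹ * ((N:ℝ) ^ (1 - α) + (n:ℝ) ^ (1 - α)) * ((N:ℝ) - n) := hmul
      _ = M * ((N:ℝ) ^ (1 - α) + (n:ℝ) ^ (1 - α)) := by
          field_simp
  -- step 2: (ρ - 1)^(1-α) ≤ (M/m) * (1 + ρ^(1-α))
  have h2 : (ρ - 1) ^ (1 - α) ≤ (M / m) * (1 + ρ ^ (1 - α)) := by
    have hdiv : ((N:ℝ) - n) ^ (1 - α) / (n:ℝ) ^ (1 - α)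
        ≤ (M / m) * (((N:ℝ) ^ (1 - α) + (n:ℝ) ^ (1 - α)) / (n:ℝ) ^ (1 - α)) := by
      rw [div_le_iff₀ (by positivity), mul_assoc, div_mul_cancel₀ _ (by positivity : ((n:ℝ) ^ (1 - α)) ≠ 0),
        div_mul_eq_mul_div, le_div_iff₀ hm]
      linarith [h1]
    have e1 : ((N:ℝ) - n) ^ (1 - α) / (n:ℝ) ^ (1 - α) = (ρ - 1) ^ (1 - α) := by
      rw [← Real.div_rpow hx.le hnn.le, hρ, sub_div, div_self hnn.ne']
    have e2 : ((N:ℝ) ^ (1 - α) + (n:ℝ) ^ (1 - α)) / (n:ℝ) ^ (1 - α) = 1 + ρ ^ (1 - α) := by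
      rw [add_div, div_self (by positivity : ((n:ℝ) ^ (1 - α)) ≠ 0),
        ← Real.div_rpow hNn.le hnn.le, ← hρ]
      ring
    rw [e1, e2] at hdiv
    exact hdiv
  -- step 3: invert
  have hρm1 : (0:ℝ) < ρ - 1 := by linarith
  have h3 : (m / M) * (1 + ρ ^ (1 - α))⁻¹ ≤ (ρ - 1) ^ (α - 1) := by
    have e : (ρ - 1) ^ (1 - α) = ((ρ - 1) ^ (α - 1))⁻¹ := by
      rw [← Real.rpow_neg hρm1.le, neg_sub]
    rw [e] at h2
    have := inv_anti₀ (by positivity) h2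
    rwa [inv_inv, mul_inv, inv_div] at this
  -- step 4: take (α-1)-th root
  have hα1 : (0:ℝ) < α - 1 := by linarith
  have h4 : ((m / M) * (1 + ρ ^ (1 - α))⁻¹) ^ (1 / (α - 1)) ≤ ρ - 1 := by
    rw [one_div, Real.rpow_inv_le_iff_of_pos (by positivity) hρm1.le hα1]
    exact h3
  linarith
end

section
/- Let α > 1 and 0 < m ≤ M. Suppose n₁ < n₂ < ⋯ is a strictly increasing sequence of positive integers such that for every k, m·(n_{k+1} − n_k)^{−α} ≤ M·(n_{k+1} − n_k)^{−1}·(n_{k+1}^{1−α} + n_k^{1−α}). Then n_{k+1} ≥ c·n_k for all k, where c = 1 + (m/(2M))^{1/(α−1)} > 1, and consequently n_k ≥ n₁·c^{k−1}, so the sequence grows at least geometrically. -/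
open Real

theorem stmt15 (α m M : ℝ) (hα : 1 < α) (hm : 0 < m) (hmM : m ≤ M)
    (n : ℕ → ℕ) (hmono : StrictMono n) (hpos : 0 < n 0)
    (hkey : ∀ k : ℕ, m * ((n (k + 1) : ℝ) - n k) ^ (-α) ≤
      M * ((n (k + 1) : ℝ) - n k)⁻¹ *
        ((n (k + 1) : ℝ) ^ (1 - α) + (n k : ℝ) ^ (1 - α))) :
    1 < 1 + (m / (2 * M)) ^ (1 / (α - 1)) ∧
    (∀ k : ℕ, (1 + (m / (2 * M)) ^ (1 / (α - 1))) * n k ≤ (n (k + 1) : ℝ)) ∧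
    (∀ k : ℕ, (n 0 : ℝ) * (1 + (m / (2 * M)) ^ (1 / (α - 1))) ^ k ≤ (n k : ℝ)) := by
  have hM : 0 < M := lt_of_lt_of_le hm hmM
  set c : ℝ := (m / (2 * M)) ^ (1 / (α - 1)) with hc
  have hα1 : 0 < α - 1 := by linarith
  have hratio : 0 < m / (2 * M) := div_pos hm (by linarith)
  have hcpos : 0 < c := Real.rpow_pos_of_pos hratio _
  have h1 : 1 < 1 + c := by linarith
  have hnk : ∀ k, 0 < (n k : ℕ) := fun k =>
    lt_of_lt_of_le hpos (hmono.le_iff_le.mpr (Nat.zero_le k))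
  have hstep : ∀ k : ℕ, (1 + c) * n k ≤ (n (k + 1) : ℝ) := by
    intro k
    have ha : (0 : ℝ) < n k := by exact_mod_cast hnk k
    have hab : (n k : ℝ) < n (k + 1) := by exact_mod_cast hmono (Nat.lt_succ_self k)
    set a : ℝ := (n k : ℝ)
    set b : ℝ := (n (k + 1) : ℝ)
    have hd : (0 : ℝ) < b - a := by linarith
    set d : ℝ := b - a with hdd
    -- b^(1-α) ≤ a^(1-α)
    have hmono' : b ^ (1 - α) ≤ a ^ (1 - α) := by
      apply Real.rpow_le_rpow_of_nonpos ha (le_of_lt hab) (by linarith)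
    have hkey' := hkey k
    have h2 : m * d ^ (-α) ≤ M * d⁻¹ * (2 * a ^ (1 - α)) := by
      calc m * d ^ (-α) ≤ M * d⁻¹ * (b ^ (1 - α) + a ^ (1 - α)) := hkey'
        _ ≤ M * d⁻¹ * (2 * a ^ (1 - α)) := by
            apply mul_le_mul_of_nonneg_left (by linarith)
            positivity
    -- multiply both sides by d > 0
    have h3 : m * d ^ (1 - α) ≤ 2 * M * a ^ (1 - α) := by
      have := mul_le_mul_of_nonneg_right h2 (le_of_lt hd)
      have e1 : m * d ^ (-α) * d = m * d ^ (1 - α) := by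
        rw [mul_assoc, show (1 - α) = -α + 1 by ring, Real.rpow_add hd, Real.rpow_one]
      have e2 : M * d⁻¹ * (2 * a ^ (1 - α)) * d = 2 * M * a ^ (1 - α) := by
        field_simp
      rw [e1, e2] at this
      exact this
    -- m/(2M) ≤ (d/a)^(α-1)
    have h4 : m / (2 * M) ≤ (d / a) ^ (α - 1) := by
      have hdr : (0:ℝ) < d ^ (1 - α) := Real.rpow_pos_of_pos hd _
      have h5 : m / (2 * M) ≤ a ^ (1 - α) / d ^ (1 - α) := by
        rw [div_le_div_iff₀ (by linarith) hdr]
        linarith [h3]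
      have e3 : a ^ (1 - α) / d ^ (1 - α) = (d / a) ^ (α - 1) := by
        rw [← Real.div_rpow (le_of_lt ha) (le_of_lt hd),
          show (α - 1) = -(1 - α) by ring,
          Real.rpow_neg (div_nonneg hd.le ha.le),
          ← Real.inv_rpow (div_nonneg hd.le ha.le), inv_div]
      rw [← e3]; exact h5
    -- raise to 1/(α-1)
    have h6 : c ≤ d / a := by
      have := Real.rpow_le_rpow (le_of_lt hratio) h4 (by positivity : (0:ℝ) ≤ 1 / (α - 1))
      rwa [← Real.rpow_mul (div_nonneg hd.le ha.le), mul_one_div,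
        div_self (ne_of_gt hα1), Real.rpow_one] at this
    have h7 : c * a ≤ d := (le_div_iff₀ ha).mp h6
    have : (1 + c) * a = a + c * a := by ring
    rw [this]
    linarith
  refine ⟨h1, hstep, ?_⟩
  intro k
  induction k with
  | zero => simp
  | succ k ih =>
    have : (n 0 : ℝ) * (1 + c) ^ (k + 1) = ((n 0 : ℝ) * (1 + c) ^ k) * (1 + c) := by ring
    rw [this]
    calc ((n 0 : ℝ) * (1 + c) ^ k) * (1 + c) ≤ (n k : ℝ) * (1 + c) := by
          apply mul_le_mul_of_nonneg_right ih (by linarith)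
      _ = (1 + c) * n k := by ring
      _ ≤ (n (k + 1) : ℝ) := hstep k
end
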